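/- arXiv:2207.04498 — 7 statements merged into one kernel-verified Lean document; each statement's English description precedes it below -/
import Mathlib

section
/- Suppose t > 0 satisfies ω·C·t·(2^{1/(Bt)} − 1)/γ = Ē, where ω, C, B, γ, Ē > 0 and A·ω < 1 with A = C·ln2/(B·γ·Ē). Then t = −ln 2 / (B·(W_{−1}(−Aω·e^{−Aω}) + Aω)). -/
private lemma lambert_inj {w1 w2 : ℝ} (h1 : w1 ≤ -1) (h2 : w2 ≤ -1)
    (h : w1 * Real.exp w1 = w2 * Real.exp w2) : w1 = w2 := by
  have hanti : StrictAntiOn (fun w : ℝ => w * Real.exp w) (Set.Iic (-1)) := by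
    apply strictAntiOn_of_deriv_neg (convex_Iic _)
    · exact (continuous_id.mul Real.continuous_exp).continuousOn
    · intro x hx
      rw [interior_Iic] at hx
      have hd : HasDerivAt (fun w : ℝ => w * Real.exp w)
          (1 * Real.exp x + x * Real.exp x) x :=
        (hasDerivAt_id x).mul (Real.hasDerivAt_exp x)
      rw [hd.deriv]
      have : (1 + x) * Real.exp x < 0 :=
        mul_neg_of_neg_of_pos (by linarith [hx.out]) (Real.exp_pos x)
      linarith [this]
  exact hanti.injOn h1 h2 h

/-- If `t > 0` satisfies the energy-budget equality
`ω·C·t·(2^{1/(Bt)} - 1)/γ = Ē` with `A·ω < 1` where `A = C·ln2/(B·γ·Ē)`,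
then `t = -ln 2 / (B·(W₋₁(-Aω·e^{-Aω}) + Aω))`, where `W` is the value of the
lower Lambert branch at `-Aω·e^{-Aω}` (i.e. `W ≤ -1`, `W·e^W = -Aω·e^{-Aω}`). -/
theorem stmt_8 (ω C B γ E A W t : ℝ)
    (hω : 0 < ω) (hC : 0 < C) (hB : 0 < B) (hγ : 0 < γ) (hE : 0 < E)
    (hA : A = C * Real.log 2 / (B * γ * E)) (hAω : A * ω < 1)
    (hW1 : W ≤ -1)
    (hW2 : W * Real.exp W = -(A * ω) * Real.exp (-(A * ω)))
    (ht : 0 < t)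
    (heq : ω * C * t * ((2 : ℝ) ^ (1 / (B * t)) - 1) / γ = E) :
    t = -Real.log 2 / (B * (W + A * ω)) := by
  set a := A * ω with ha'
  have hlog2 : 0 < Real.log 2 := Real.log_pos (by norm_num)
  have hBt : 0 < B * t := mul_pos hB ht
  set u := Real.log 2 / (B * t) with hu'
  have hu : 0 < u := div_pos hlog2 hBt
  have hpow : (2 : ℝ) ^ (1 / (B * t)) = Real.exp u := by
    rw [Real.rpow_def_of_pos (by norm_num : (0:ℝ) < 2)]
    congr 1
    field_simp [hu']
    rw [hu']; field_simp
  rw [hpow] at heq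
  -- key equation: a * (exp u - 1) = u
  have h0 : ω * C * t * (Real.exp u - 1) = E * γ := by
    field_simp at heq; linarith
  have hkey : a * (Real.exp u - 1) = u := by
    rw [ha', hA]
    conv_rhs => rw [hu']
    field_simp
    linear_combination h0
  have hE1 : 1 < Real.exp u := by
    rw [show (1:ℝ) = Real.exp 0 by simp]
    exact Real.exp_lt_exp.mpr hu
  -- (u-1) * exp u + 1 > 0
  have haux : 0 < (u - 1) * Real.exp u + 1 := by
    have h1 : 1 - u < Real.exp (-u) := by
      have := Real.add_one_lt_exp (x := -u) (by linarith)
      linarith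
    have h2 : (1 - u) * Real.exp u < Real.exp (-u) * Real.exp u :=
      mul_lt_mul_of_pos_right h1 (Real.exp_pos u)
    rw [← Real.exp_add] at h2
    simp at h2
    nlinarith
  -- u + a > 1
  have hua : 1 < u + a := by
    nlinarith [hkey, hE1, haux]
  -- the candidate solution
  have hcand : (-u - a) * Real.exp (-u - a) = -a * Real.exp (-a) := by
    have hae : a * Real.exp u = u + a := by nlinarith [hkey]
    have : (-u - a) * Real.exp (-u - a) = -(u + a) * Real.exp (-u) * Real.exp (-a) := by
      rw [show -u - a = -u + -a by ring, Real.exp_add]; ring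
    rw [this, ← hae]
    have hinv : Real.exp u * Real.exp (-u) = 1 := by
      rw [← Real.exp_add]; simp
    linear_combination (-a * Real.exp (-a)) * hinv
  have hWeq : W = -u - a := by
    apply lambert_inj hW1 (by linarith)
    rw [hW2, hcand]
  rw [hWeq]
  have : B * (-u - a + a) = -(Real.log 2) / t := by
    rw [hu']; field_simp; ring
  rw [this]
  field_simp
end

section
/- Define g: (0, 1/A) → ℝ by g(x) = −x / (W_{−1}(−Ax·e^{−Ax}) + Ax), for a constant A > 0. Then g'(x) = −W / ((W − x')·(1 + W)) where x' = −Ax and W = W_{−1}(x'·e^{x'}), and g'(x) > 0 on the domain. -/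
open Real Set Filter
open scoped Topology

private lemma hasDerivAt_F (w : ℝ) :
    HasDerivAt (fun w : ℝ => w * Real.exp w) ((1 + w) * Real.exp w) w := by
  have := (hasDerivAt_id w).mul (Real.hasDerivAt_exp w)
  exact this.congr_deriv (by simp only [id_eq]; ring)

private lemma F_injOn : Set.InjOn (fun w : ℝ => w * Real.exp w) (Set.Iic (-1)) := by
  have : StrictAntiOn (fun w : ℝ => w * Real.exp w) (Set.Iic (-1)) := by
    apply strictAntiOn_of_deriv_neg (convex_Iic _)
    · exact (continuous_id.mul Real.continuous_exp).continuousOn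
    · intro w hw
      rw [interior_Iic] at hw
      rw [(hasDerivAt_F w).deriv]
      have h1 : 1 + w < 0 := by linarith [hw.out]
      exact mul_neg_of_neg_of_pos h1 (Real.exp_pos w)
  exact this.injOn

private lemma F_mem (t : ℝ) (ht : t ∈ Set.Ioo (-1 : ℝ) 0) :
    t * Real.exp t ∈ Set.Ioo (-(Real.exp 1)⁻¹) (0 : ℝ) := by
  obtain ⟨h1, h2⟩ := ht
  constructor
  · have hlt : Real.log (-t) < -t - 1 := by
      have := Real.log_lt_sub_one_of_pos (x := -t) (by linarith) (by intro h; linarith [h])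
      linarith [this]
    have : Real.log (-t) + t < -1 := by linarith
    have hexp : Real.exp (Real.log (-t) + t) < Real.exp (-1) := Real.exp_lt_exp.2 this
    have hrw : Real.exp (Real.log (-t) + t) = (-t) * Real.exp t := by
      rw [Real.exp_add, Real.exp_log (by linarith)]
    rw [hrw] at hexp
    rw [Real.exp_neg] at hexp
    linarith
  · exact mul_neg_of_neg_of_pos h2 (Real.exp_pos t)

/-- Let `Wm1` be the lower branch of the Lambert W function on `(-1/e, 0)`.
For `A > 0`, the function `g(x) = -x / (Wm1(-Ax·e^{-Ax}) + Ax)` has derivative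
`-W / ((W - x')·(1 + W))` at every `x ∈ (0, 1/A)`, where `x' = -Ax` and
`W = Wm1(x'·e^{x'})`, and this derivative is positive. -/
theorem stmt_9 (A : ℝ) (hA : 0 < A) (Wm1 : ℝ → ℝ)
    (hW : ∀ z ∈ Set.Ioo (-(Real.exp 1)⁻¹) (0 : ℝ),
      Wm1 z ≤ -1 ∧ Wm1 z * Real.exp (Wm1 z) = z) :
    ∀ x ∈ Set.Ioo (0 : ℝ) (1 / A),
      HasDerivAt (fun x : ℝ => -x / (Wm1 (-(A * x) * Real.exp (-(A * x))) + A * x))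
        (-(Wm1 ((-(A * x)) * Real.exp (-(A * x)))) /
          ((Wm1 ((-(A * x)) * Real.exp (-(A * x))) - (-(A * x))) *
            (1 + Wm1 ((-(A * x)) * Real.exp (-(A * x)))))) x ∧
      0 < -(Wm1 ((-(A * x)) * Real.exp (-(A * x)))) /
          ((Wm1 ((-(A * x)) * Real.exp (-(A * x))) - (-(A * x))) *
            (1 + Wm1 ((-(A * x)) * Real.exp (-(A * x))))) := by
  intro x hx
  obtain ⟨hx0, hx1⟩ := hx
  set x' : ℝ := -(A * x) with hx'
  have hAx : 0 < A * x := mul_pos hA hx0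
  have hAx1 : A * x < 1 := by
    rw [lt_div_iff₀ hA] at hx1
    nlinarith
  have hx'mem : x' ∈ Set.Ioo (-1 : ℝ) 0 := ⟨by simp [hx']; linarith, by simp [hx']; linarith⟩
  set z : ℝ := x' * Real.exp x' with hz
  have hzmem : z ∈ Set.Ioo (-(Real.exp 1)⁻¹) (0 : ℝ) := F_mem x' hx'mem
  set w : ℝ := Wm1 z with hw
  obtain ⟨hwle, hweq⟩ := hW z hzmem
  have hwlt : w < -1 := by
    rcases lt_or_eq_of_le hwle with h | h
    · exact h
    · exfalso
      rw [h] at hweq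
      simp [Real.exp_neg] at hweq
      have := hzmem.1
      rw [← hweq] at this
      linarith
  have hexpw : (0:ℝ) < Real.exp w := Real.exp_pos w
  have h1w : 1 + w < 0 := by linarith
  have hFw : w * Real.exp w = z := hweq
  -- strict derivative of F at w
  have hF : HasStrictDerivAt (fun w : ℝ => w * Real.exp w) ((1 + w) * Real.exp w) w := by
    have := ((hasStrictDerivAt_id w).mul (Real.hasStrictDerivAt_exp w))
    exact this.congr_deriv (by simp only [id_eq]; ring)
  have hne : (1 + w) * Real.exp w ≠ 0 := by
    exact ne_of_lt (mul_neg_of_neg_of_pos h1w hexpw)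
  -- eventual left inverse
  have hleft : ∀ᶠ u in 𝓝 w, Wm1 (u * Real.exp u) = u := by
    have h1 : ∀ᶠ u in 𝓝 w, u < -1 := eventually_lt_nhds hwlt
    have hcont : ContinuousAt (fun u : ℝ => u * Real.exp u) w :=
      (continuous_id.mul Real.continuous_exp).continuousAt
    have h2 : ∀ᶠ u in 𝓝 w, (u * Real.exp u) ∈ Set.Ioo (-(Real.exp 1)⁻¹) (0 : ℝ) := by
      have : Set.Ioo (-(Real.exp 1)⁻¹) (0 : ℝ) ∈ 𝓝 (w * Real.exp w) := by
        rw [hFw]; exact Ioo_mem_nhds hzmem.1 hzmem.2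
      exact hcont.eventually_mem this
    filter_upwards [h1, h2] with u hu1 hu2
    obtain ⟨ha, hb⟩ := hW _ hu2
    exact F_injOn (Set.mem_Iic.2 ha) (Set.mem_Iic.2 hu1.le) hb
  have hWd : HasStrictDerivAt Wm1 (((1 + w) * Real.exp w)⁻¹) z := by
    have := hF.to_local_left_inverse hne hleft
    rwa [hFw] at this
  -- inner function
  have hinner : HasDerivAt (fun y : ℝ => -(A * y) * Real.exp (-(A * y)))
      ((1 + x') * Real.exp x' * (-A)) x := by
    have hlin : HasDerivAt (fun y : ℝ => -(A * y)) (-A) x := by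
      exact (((hasDerivAt_id x).const_mul A).neg).congr_deriv (by simp)
    exact (hasDerivAt_F x').comp x hlin
  have hinner_val : -(A * x) * Real.exp (-(A * x)) = z := rfl
  have hWx : HasDerivAt (fun y : ℝ => Wm1 (-(A * y) * Real.exp (-(A * y))))
      (((1 + w) * Real.exp w)⁻¹ * ((1 + x') * Real.exp x' * (-A))) x := by
    exact (hWd.hasDerivAt.comp x hinner)
  set dW : ℝ := ((1 + w) * Real.exp w)⁻¹ * ((1 + x') * Real.exp x' * (-A)) with hdW
  -- denominator
  have hden : HasDerivAt (fun y : ℝ => Wm1 (-(A * y) * Real.exp (-(A * y))) + A * y)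
      (dW + A) x := by
    have hlin : HasDerivAt (fun y : ℝ => A * y) A x := by
      simpa using (hasDerivAt_id x).const_mul A
    exact hWx.add hlin
  have hden_val : Wm1 (-(A * x) * Real.exp (-(A * x))) + A * x = w - x' := by
    rw [hinner_val]; simp only [hw, hx']; ring
  have hwx' : w - x' < 0 := by
    have : -1 < x' := hx'mem.1
    linarith
  have hden_ne : Wm1 (-(A * x) * Real.exp (-(A * x))) + A * x ≠ 0 := by
    rw [hden_val]; exact ne_of_lt hwx'
  have hnum : HasDerivAt (fun y : ℝ => -y) (-1 : ℝ) x := by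
    exact (hasDerivAt_id x).neg
  have hdiv := hnum.div hden hden_ne
  rw [hden_val] at hdiv
  -- algebra: the derivative value equals the target
  have hx'ne : x' ≠ 0 := ne_of_lt hx'mem.2
  have hwne : w ≠ 0 := by linarith
  have hexpx' : Real.exp x' = z / x' := by
    field_simp [hz]
    rw [hz]; ring
  have hexpw' : Real.exp w = z / w := by
    field_simp
    linear_combination hweq
  have hzne : z ≠ 0 := ne_of_lt hzmem.2
  have hxval : x = -x' / A := by
    rw [hx']; field_simp
  have hkey : (-1 * (w - x') - -x * (dW + A)) / (w - x') ^ 2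
      = -w / ((w - x') * (1 + w)) := by
    rw [hdW, hexpx', hexpw', hxval]
    have h1wne : 1 + w ≠ 0 := ne_of_lt h1w
    have hwxne : w - x' ≠ 0 := ne_of_lt hwx'
    field_simp
    ring
  rw [hkey] at hdiv
  refine ⟨hdiv, ?_⟩
  exact div_pos (by linarith) (mul_pos_of_neg_of_neg hwx' h1w)
end

section
/- Define g: (0, 1/A) → ℝ by g(x) = −x / (W_{−1}(−Ax·e^{−Ax}) + Ax), for a constant A > 0. Then g''(x) = W / (x·(1 + W)³) > 0 where W = W_{−1}(−Ax·e^{−Ax}); hence g is strictly convex on its domain. -/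
open Real Filter Set Topology

lemma wexp_inj {w₁ w₂ : ℝ} (h1 : w₁ ≤ -1) (h2 : w₂ ≤ -1)
    (h : w₁ * Real.exp w₁ = w₂ * Real.exp w₂) : w₁ = w₂ := by
  have hanti : StrictAntiOn (fun w : ℝ => w * Real.exp w) (Set.Iic (-1)) := by
    apply strictAntiOn_of_deriv_neg (convex_Iic _)
    · exact (continuous_id.mul Real.continuous_exp).continuousOn
    · intro w hw
      rw [interior_Iic] at hw
      have hd : HasDerivAt (fun w : ℝ => w * Real.exp w) (1 * Real.exp w + w * Real.exp w) w :=
        (hasDerivAt_id w).mul (Real.hasDerivAt_exp w)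
      rw [hd.deriv]
      have he : (0:ℝ) < Real.exp w := Real.exp_pos w
      have hw' : w < -1 := hw
      nlinarith
  exact hanti.injOn h1 h2 h

lemma basic (A : ℝ) (hA : 0 < A) (Wm1 : ℝ → ℝ)
    (hW : ∀ z ∈ Set.Ioo (-(Real.exp 1)⁻¹) (0:ℝ), Wm1 z ≤ -1 ∧ Wm1 z * Real.exp (Wm1 z) = z)
    {x : ℝ} (hx : x ∈ Set.Ioo (0:ℝ) (1/A)) :
    (-(A*x) * Real.exp (-(A*x)) ∈ Set.Ioo (-(Real.exp 1)⁻¹) (0:ℝ)) ∧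
    Wm1 (-(A*x)*Real.exp (-(A*x))) < -1 ∧
    Wm1 (-(A*x)*Real.exp (-(A*x))) * Real.exp (Wm1 (-(A*x)*Real.exp (-(A*x))))
      = -(A*x)*Real.exp (-(A*x)) := by
  have ht0 : 0 < A*x := mul_pos hA hx.1
  have ht1 : A*x < 1 := by
    have := (lt_div_iff₀ hA).mp hx.2
    linarith
  have hmem : -(A*x) * Real.exp (-(A*x)) ∈ Set.Ioo (-(Real.exp 1)⁻¹) (0:ℝ) := by
    constructor
    · have h1 : A*x < Real.exp (A*x - 1) := by
        have := Real.add_one_lt_exp (x := A*x - 1) (by intro h; linarith [sub_eq_zero.mp h])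
        linarith
      have h2 : A*x * Real.exp (-(A*x)) < Real.exp (A*x-1) * Real.exp (-(A*x)) :=
        mul_lt_mul_of_pos_right h1 (Real.exp_pos _)
      have h3 : Real.exp (A*x-1) * Real.exp (-(A*x)) = Real.exp (-1) := by
        rw [← Real.exp_add]; ring_nf
      have h4 : Real.exp (-1 : ℝ) = (Real.exp 1)⁻¹ := Real.exp_neg 1
      nlinarith
    · have := Real.exp_pos (-(A*x))
      nlinarith
  obtain ⟨hle, hid⟩ := hW _ hmem
  refine ⟨hmem, ?_, hid⟩
  rcases lt_or_eq_of_le hle with h | h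
  · exact h
  · exfalso
    rw [h] at hid
    have : (-1 : ℝ) * Real.exp (-1) = -(Real.exp 1)⁻¹ := by
      rw [Real.exp_neg 1]; ring
    rw [this] at hid
    have := hmem.1
    linarith [hid]

lemma Wderiv (A : ℝ) (hA : 0 < A) (Wm1 : ℝ → ℝ)
    (hW : ∀ z ∈ Set.Ioo (-(Real.exp 1)⁻¹) (0:ℝ), Wm1 z ≤ -1 ∧ Wm1 z * Real.exp (Wm1 z) = z)
    {x : ℝ} (hx : x ∈ Set.Ioo (0:ℝ) (1/A)) :
    HasDerivAt (fun x => Wm1 (-(A*x)*Real.exp (-(A*x))))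
      (Wm1 (-(A*x)*Real.exp (-(A*x))) * (1 - A*x) /
        (x * (1 + Wm1 (-(A*x)*Real.exp (-(A*x)))))) x := by
  obtain ⟨hmem, hWlt, hid⟩ := basic A hA Wm1 hW hx
  set w₀ := Wm1 (-(A*x)*Real.exp (-(A*x))) with hw₀
  -- strict derivative of h(w) = w e^w at w₀
  have hh : HasStrictDerivAt (fun w : ℝ => w * Real.exp w) (1 * Real.exp w₀ + w₀ * Real.exp w₀) w₀ :=
    (hasStrictDerivAt_id w₀).mul (Real.hasStrictDerivAt_exp w₀)
  have hne : 1 * Real.exp w₀ + w₀ * Real.exp w₀ ≠ 0 := by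
    have := Real.exp_pos w₀
    nlinarith
  -- eventually Wm1 (w e^w) = w near w₀
  have hg : ∀ᶠ w in 𝓝 w₀, Wm1 (w * Real.exp w) = w := by
    have hcont : ContinuousAt (fun w : ℝ => w * Real.exp w) w₀ :=
      (continuous_id.mul Real.continuous_exp).continuousAt
    have hmem' : (fun w : ℝ => w * Real.exp w) w₀ ∈ Set.Ioo (-(Real.exp 1)⁻¹) (0:ℝ) := by
      simpa [hid] using hmem
    have h1 : ∀ᶠ w in 𝓝 w₀, w * Real.exp w ∈ Set.Ioo (-(Real.exp 1)⁻¹) (0:ℝ) :=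
      hcont.preimage_mem_nhds (Ioo_mem_nhds hmem'.1 hmem'.2)
    have h2 : ∀ᶠ w in 𝓝 w₀, w < -1 := eventually_lt_nhds hWlt
    filter_upwards [h1, h2] with w hw1 hw2
    obtain ⟨hle', hid'⟩ := hW _ hw1
    exact wexp_inj hle' hw2.le hid'
  have hWs : HasStrictDerivAt Wm1 (1 * Real.exp w₀ + w₀ * Real.exp w₀)⁻¹ (w₀ * Real.exp w₀) :=
    hh.to_local_left_inverse hne hg
  have hWs2 : HasDerivAt Wm1 (1 * Real.exp w₀ + w₀ * Real.exp w₀)⁻¹ (-(A*x)*Real.exp (-(A*x))) := by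
    rw [← hid]; exact hWs.hasDerivAt
  -- derivative of the inner function
  have hAx : HasDerivAt (fun x : ℝ => -(A*x)) (-A) x := by
    exact ((hasDerivAt_id x).const_mul A).neg.congr_deriv (by simp)
  have hexp : HasDerivAt (fun x : ℝ => Real.exp (-(A*x))) (Real.exp (-(A*x)) * (-A)) x :=
    hAx.exp
  have hu : HasDerivAt (fun x : ℝ => -(A*x) * Real.exp (-(A*x)))
      ((-A) * Real.exp (-(A*x)) + (-(A*x)) * (Real.exp (-(A*x)) * (-A))) x := hAx.mul hexp
  have hcomp := hWs2.comp x hu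
  rw [Function.comp_def] at hcomp
  convert hcomp using 1
  case e'_4 | e'_5 => rfl
  -- value identity
  have he1 : Real.exp (-(A*x)) ≠ 0 := Real.exp_ne_zero _
  have he2 : Real.exp w₀ ≠ 0 := Real.exp_ne_zero _
  have hx0 : x ≠ 0 := ne_of_gt hx.1
  have h1w : 1 + w₀ ≠ 0 := by intro h; nlinarith
  have hw0 : w₀ ≠ 0 := by intro h; rw [h] at hWlt; norm_num at hWlt
  have hA0 : A ≠ 0 := ne_of_gt hA
  rw [inv_mul_eq_div, div_eq_div_iff (mul_ne_zero hx0 h1w) hne]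
  linear_combination ((1 - A*x) * (1 + w₀)) * hid

lemma gderiv (A : ℝ) (hA : 0 < A) (Wm1 : ℝ → ℝ)
    (hW : ∀ z ∈ Set.Ioo (-(Real.exp 1)⁻¹) (0:ℝ), Wm1 z ≤ -1 ∧ Wm1 z * Real.exp (Wm1 z) = z)
    {x : ℝ} (hx : x ∈ Set.Ioo (0:ℝ) (1/A)) :
    HasDerivAt (fun x => -x / (Wm1 (-(A*x)*Real.exp (-(A*x))) + A*x))
      (-(Wm1 (-(A*x)*Real.exp (-(A*x)))) /
        ((1 + Wm1 (-(A*x)*Real.exp (-(A*x)))) * (Wm1 (-(A*x)*Real.exp (-(A*x))) + A*x))) x := by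
  obtain ⟨hmem, hWlt, hid⟩ := basic A hA Wm1 hW hx
  have hWd := Wderiv A hA Wm1 hW hx
  set w₀ := Wm1 (-(A*x)*Real.exp (-(A*x))) with hw₀
  have ht1 : A*x < 1 := by
    have := (lt_div_iff₀ hA).mp hx.2
    linarith
  have hx0 : x ≠ 0 := ne_of_gt hx.1
  have h1w : 1 + w₀ ≠ 0 := by intro h; nlinarith
  have hden : w₀ + A*x ≠ 0 := by intro h; nlinarith
  have hnum : HasDerivAt (fun x : ℝ => -x) (-1) x := (hasDerivAt_id x).neg
  have hAl : HasDerivAt (fun x : ℝ => A*x) A x := by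
    simpa using (hasDerivAt_id x).const_mul A
  have hdenD : HasDerivAt (fun x => Wm1 (-(A*x)*Real.exp (-(A*x))) + A*x)
      (w₀*(1-A*x)/(x*(1+w₀)) + A) x := hWd.add hAl
  have hdiv : HasDerivAt (fun x => -x / (Wm1 (-(A*x)*Real.exp (-(A*x))) + A*x))
      (((-1) * (w₀ + A*x) - (-x) * (w₀*(1-A*x)/(x*(1+w₀)) + A)) / (w₀ + A*x)^2) x :=
    hnum.div hdenD hden
  convert hdiv using 1
  field_simp
  ring

lemma g2deriv (A : ℝ) (hA : 0 < A) (Wm1 : ℝ → ℝ)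
    (hW : ∀ z ∈ Set.Ioo (-(Real.exp 1)⁻¹) (0:ℝ), Wm1 z ≤ -1 ∧ Wm1 z * Real.exp (Wm1 z) = z)
    {x : ℝ} (hx : x ∈ Set.Ioo (0:ℝ) (1/A)) :
    HasDerivAt (fun x => -(Wm1 (-(A*x)*Real.exp (-(A*x)))) /
        ((1 + Wm1 (-(A*x)*Real.exp (-(A*x)))) * (Wm1 (-(A*x)*Real.exp (-(A*x))) + A*x)))
      (Wm1 (-(A*x)*Real.exp (-(A*x))) /
        (x * (1 + Wm1 (-(A*x)*Real.exp (-(A*x)))) ^ 3)) x := by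
  obtain ⟨hmem, hWlt, hid⟩ := basic A hA Wm1 hW hx
  have hWd := Wderiv A hA Wm1 hW hx
  set w₀ := Wm1 (-(A*x)*Real.exp (-(A*x))) with hw₀
  have ht1 : A*x < 1 := by
    have := (lt_div_iff₀ hA).mp hx.2
    linarith
  have hx0 : x ≠ 0 := ne_of_gt hx.1
  have h1w : 1 + w₀ ≠ 0 := by intro h; nlinarith
  have hden : w₀ + A*x ≠ 0 := by intro h; nlinarith
  have hAl : HasDerivAt (fun x : ℝ => A*x) A x := by
    simpa using (hasDerivAt_id x).const_mul A
  have hn : HasDerivAt (fun x => -(Wm1 (-(A*x)*Real.exp (-(A*x)))))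
      (-(w₀*(1-A*x)/(x*(1+w₀)))) x := hWd.neg
  have hd1 : HasDerivAt (fun x => 1 + Wm1 (-(A*x)*Real.exp (-(A*x))))
      (w₀*(1-A*x)/(x*(1+w₀))) x := hWd.const_add 1
  have hd2 : HasDerivAt (fun x => Wm1 (-(A*x)*Real.exp (-(A*x))) + A*x)
      (w₀*(1-A*x)/(x*(1+w₀)) + A) x := hWd.add hAl
  have hd : HasDerivAt (fun x => (1 + Wm1 (-(A*x)*Real.exp (-(A*x)))) *
        (Wm1 (-(A*x)*Real.exp (-(A*x))) + A*x))
      ((w₀*(1-A*x)/(x*(1+w₀))) * (w₀ + A*x)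
        + (1 + w₀) * (w₀*(1-A*x)/(x*(1+w₀)) + A)) x := hd1.mul hd2
  have hne' : (1 + w₀) * (w₀ + A*x) ≠ 0 := mul_ne_zero h1w hden
  have hdiv : HasDerivAt (fun x => -(Wm1 (-(A*x)*Real.exp (-(A*x)))) /
        ((1 + Wm1 (-(A*x)*Real.exp (-(A*x)))) * (Wm1 (-(A*x)*Real.exp (-(A*x))) + A*x)))
      ((-(w₀*(1-A*x)/(x*(1+w₀))) * ((1 + w₀) * (w₀ + A*x))
          - (-w₀) * ((w₀*(1-A*x)/(x*(1+w₀))) * (w₀ + A*x)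
            + (1 + w₀) * (w₀*(1-A*x)/(x*(1+w₀)) + A)))
        / ((1 + w₀) * (w₀ + A*x))^2) x := hn.div hd hne'
  convert hdiv using 1
  rw [eq_div_iff (pow_ne_zero 2 hne')]
  field_simp
  ring


/-- Let `Wm1` be the lower branch of the Lambert W function on `(-1/e, 0)`.
For `A > 0` and `g(x) = -x / (Wm1(-Ax·e^{-Ax}) + Ax)` on `(0, 1/A)`, the second
derivative of `g` equals `W / (x·(1 + W)³) > 0`, with `W = Wm1(-Ax·e^{-Ax})`;
hence `g` is strictly convex on `(0, 1/A)`. -/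
theorem stmt_10 (A : ℝ) (hA : 0 < A) (Wm1 : ℝ → ℝ)
    (hW : ∀ z ∈ Set.Ioo (-(Real.exp 1)⁻¹) (0 : ℝ),
      Wm1 z ≤ -1 ∧ Wm1 z * Real.exp (Wm1 z) = z) :
    (∀ x ∈ Set.Ioo (0 : ℝ) (1 / A),
      deriv (deriv (fun x : ℝ =>
          -x / (Wm1 (-(A * x) * Real.exp (-(A * x))) + A * x))) x
        = Wm1 (-(A * x) * Real.exp (-(A * x))) /
            (x * (1 + Wm1 (-(A * x) * Real.exp (-(A * x)))) ^ 3) ∧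
      0 < Wm1 (-(A * x) * Real.exp (-(A * x))) /
            (x * (1 + Wm1 (-(A * x) * Real.exp (-(A * x)))) ^ 3)) ∧
    StrictConvexOn ℝ (Set.Ioo (0 : ℝ) (1 / A))
      (fun x : ℝ => -x / (Wm1 (-(A * x) * Real.exp (-(A * x))) + A * x)) := by
  have key : ∀ x ∈ Set.Ioo (0 : ℝ) (1 / A),
      deriv (deriv (fun x : ℝ =>
          -x / (Wm1 (-(A * x) * Real.exp (-(A * x))) + A * x))) x
        = Wm1 (-(A * x) * Real.exp (-(A * x))) /
            (x * (1 + Wm1 (-(A * x) * Real.exp (-(A * x)))) ^ 3) ∧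
      0 < Wm1 (-(A * x) * Real.exp (-(A * x))) /
            (x * (1 + Wm1 (-(A * x) * Real.exp (-(A * x)))) ^ 3) := by
    intro x hx
    obtain ⟨hmem, hWlt, hid⟩ := basic A hA Wm1 hW hx
    constructor
    · have hev : deriv (fun x : ℝ => -x / (Wm1 (-(A * x) * Real.exp (-(A * x))) + A * x))
          =ᶠ[nhds x] (fun x => -(Wm1 (-(A*x)*Real.exp (-(A*x)))) /
            ((1 + Wm1 (-(A*x)*Real.exp (-(A*x)))) * (Wm1 (-(A*x)*Real.exp (-(A*x))) + A*x))) := by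
        filter_upwards [Ioo_mem_nhds hx.1 hx.2] with y hy
        exact (gderiv A hA Wm1 hW hy).deriv
      rw [hev.deriv_eq]
      exact (g2deriv A hA Wm1 hW hx).deriv
    · have hx0 : 0 < x := hx.1
      have h1w : 1 + Wm1 (-(A * x) * Real.exp (-(A * x))) < 0 := by linarith
      have h3 : (1 + Wm1 (-(A * x) * Real.exp (-(A * x)))) ^ 3 < 0 :=
        Odd.pow_neg ⟨1, by norm_num⟩ h1w
      have hd : x * (1 + Wm1 (-(A * x) * Real.exp (-(A * x)))) ^ 3 < 0 :=
        mul_neg_of_pos_of_neg hx0 h3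
      exact div_pos_of_neg_of_neg (by linarith) hd
  refine ⟨key, ?_⟩
  apply strictConvexOn_of_deriv2_pos (convex_Ioo _ _)
  · intro y hy
    exact (gderiv A hA Wm1 hW hy).continuousAt.continuousWithinAt
  · intro y hy
    rw [interior_Ioo] at hy
    have h2 : deriv^[2] (fun x : ℝ =>
        -x / (Wm1 (-(A * x) * Real.exp (-(A * x))) + A * x)) y
        = deriv (deriv (fun x : ℝ =>
          -x / (Wm1 (-(A * x) * Real.exp (-(A * x))) + A * x))) y := rfl
    rw [h2, (key y hy).1]
    exact (key y hy).2
end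

section
/- For constants B > 0 and p, γ > 0, the piecewise function f(ω) = ω / (B·log₂(1 + p·γ)) for ω ≤ ω̂ and f(ω) = −ω·ln2 / (B·(W_{−1}(−Aω·e^{−Aω}) + Aω)) for ω ≥ ω̂, where A = C·ln2/(B·γ·Ē) and ω̂ = B·log₂(1 + p·γ)·Ē/(p·C), is continuous, increasing, and convex in ω on (0, 1/A). -/
open Set Real

private lemma aux_log_ge {z : ℝ} (hz : 0 < z) : 1 - 1 / z ≤ Real.log z := by
  have h := Real.log_le_sub_one_of_pos (inv_pos.2 hz)
  rw [Real.log_inv] at h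
  have : (1 : ℝ) / z = z⁻¹ := one_div z
  linarith

private lemma aux_log_gt {z : ℝ} (hz : 0 < z) (hz1 : z ≠ 1) : 1 - 1 / z < Real.log z := by
  have h := Real.log_lt_sub_one_of_pos (inv_pos.2 hz) (by
    intro hcon
    exact hz1 (by rw [← inv_inv z, hcon, inv_one]))
  rw [Real.log_inv] at h
  have : (1 : ℝ) / z = z⁻¹ := one_div z
  linarith

private lemma h0_strictMono {c : ℝ} (hc : 0 < c) :
    StrictMonoOn (fun t : ℝ => t * Real.log (1 + c / t)) (Set.Ioi 0) := by
  intro t1 h1 t2 h2 hlt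
  simp only [Set.mem_Ioi] at h1 h2
  have hy1 : (0 : ℝ) < 1 + c / t1 := by positivity
  have hy2 : (0 : ℝ) < 1 + c / t2 := by positivity
  set a := Real.log (1 + c / t1) with ha
  set b := Real.log (1 + c / t2) with hb
  -- key1 : b - a ≥ 1 - (1+c/t1)/(1+c/t2)
  have key1 : 1 - (1 + c / t1) / (1 + c / t2) ≤ b - a := by
    have h := aux_log_ge (z := (1 + c / t2) / (1 + c / t1)) (by positivity)
    rw [Real.log_div (by positivity) (by positivity)] at h
    have h2' : 1 / ((1 + c / t2) / (1 + c / t1)) = (1 + c / t1) / (1 + c / t2) := by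
      rw [one_div, inv_div]
    rw [h2'] at h
    linarith
  have key1' : -(c * (t2 - t1) / (t2 + c)) ≤ t1 * (b - a) := by
    have hq : t1 * (1 - (1 + c / t1) / (1 + c / t2)) = -(c * (t2 - t1) / (t2 + c)) := by
      field_simp
      ring
    nlinarith [mul_le_mul_of_nonneg_left key1 h1.le]
  have key2 : (t2 - t1) * (c / (t2 + c)) < (t2 - t1) * b := by
    have h := aux_log_gt (z := 1 + c / t2) hy2 (by
      have : 0 < c / t2 := by positivity
      intro hcon; linarith)
    have h1' : 1 - 1 / (1 + c / t2) = c / (t2 + c) := by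
      field_simp
      ring
    rw [h1'] at h
    exact mul_lt_mul_of_pos_left h (by linarith)
  have key1'' : -(c * (t2 - t1) / (t2 + c)) ≤ t1 * b - t1 * a := by nlinarith [key1']
  have key2' : (t2 - t1) * (c / (t2 + c)) = c * (t2 - t1) / (t2 + c) := by ring
  rw [key2', sub_mul] at key2
  simp only []
  rw [← ha, ← hb]
  linarith

private lemma h0_concave {c : ℝ} (hc : 0 < c) :
    ConcaveOn ℝ (Set.Ioi 0) (fun t : ℝ => t * Real.log (1 + c / t)) := by
  refine ⟨convex_Ioi 0, ?_⟩
  intro t1 h1 t2 h2 a b ha hb hab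
  simp only [Set.mem_Ioi, smul_eq_mul] at *
  set T := a * t1 + b * t2 with hT
  have hT0 : 0 < T := by
    rcases eq_or_lt_of_le ha with h | h
    · have hb1 : b = 1 := by linarith
      simp [hT, ← h, hb1]; linarith
    · nlinarith
  have hy1 : (0 : ℝ) < 1 + c / t1 := by positivity
  have hy2 : (0 : ℝ) < 1 + c / t2 := by positivity
  have hw1 : (0 : ℝ) ≤ a * t1 / T := by positivity
  have hw2 : (0 : ℝ) ≤ b * t2 / T := by positivity
  have hwsum : a * t1 / T + b * t2 / T = 1 := by
    field_simp
    linarith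
  have key := (strictConcaveOn_log_Ioi.concaveOn).2 (Set.mem_Ioi.2 hy1)
    (Set.mem_Ioi.2 hy2) hw1 hw2 hwsum
  simp only [smul_eq_mul] at key
  have hcomb : a * t1 / T * (1 + c / t1) + b * t2 / T * (1 + c / t2) = 1 + c / T := by
    have step : a * t1 / T * (1 + c / t1) + b * t2 / T * (1 + c / t2)
        = (a * t1 + b * t2 + (a + b) * c) / T := by
      field_simp
      ring
    rw [step, hab, one_mul, ← hT, add_div, div_self hT0.ne']
  rw [hcomb] at key
  have hmul := mul_le_mul_of_nonneg_left key hT0.le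
  calc a * (t1 * Real.log (1 + c / t1)) + b * (t2 * Real.log (1 + c / t2))
      = T * (a * t1 / T * Real.log (1 + c / t1) + b * t2 / T * Real.log (1 + c / t2)) := by
        field_simp
    _ ≤ T * Real.log (1 + c / T) := hmul

/-- The piecewise optimal per-bit transmission-time function
`f(ω) = ω / (B·log₂(1+pγ))` for `ω ≤ ω̂` and
`f(ω) = -ω·ln2 / (B·(W₋₁(-Aω·e^{-Aω}) + Aω))` for `ω ≥ ω̂`,
with `A = C·ln2/(B·γ·Ē)` and `ω̂ = B·log₂(1+pγ)·Ē/(p·C)`, is continuous,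
(strictly) increasing and convex on `(0, 1/A)`. -/
theorem stmt_11 (B p γ C E : ℝ) (hB : 0 < B) (hp : 0 < p) (hγ : 0 < γ)
    (hC : 0 < C) (hE : 0 < E) (Wm1 : ℝ → ℝ)
    (hW : ∀ z ∈ Set.Ioo (-(Real.exp 1)⁻¹) (0 : ℝ),
      Wm1 z ≤ -1 ∧ Wm1 z * Real.exp (Wm1 z) = z)
    (A ωhat : ℝ)
    (hA : A = C * Real.log 2 / (B * γ * E))
    (hωhat : ωhat = B * Real.logb 2 (1 + p * γ) * E / (p * C))
    (f : ℝ → ℝ)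
    (hf : ∀ ω : ℝ, f ω =
      if ω ≤ ωhat then ω / (B * Real.logb 2 (1 + p * γ))
      else -(ω * Real.log 2) /
        (B * (Wm1 (-(A * ω) * Real.exp (-(A * ω))) + A * ω))) :
    ContinuousOn f (Set.Ioo (0 : ℝ) (1 / A)) ∧
    StrictMonoOn f (Set.Ioo (0 : ℝ) (1 / A)) ∧
    ConvexOn ℝ (Set.Ioo (0 : ℝ) (1 / A)) f := by
  have hln2 : 0 < Real.log 2 := Real.log_pos (by norm_num)
  have hpγ : 0 < p * γ := mul_pos hp hγ
  have hlog1 : 0 < Real.log (1 + p * γ) := Real.log_pos (by linarith)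
  have hlogb : 0 < Real.logb 2 (1 + p * γ) := by
    rw [← Real.log_div_log]; positivity
  have hA0 : 0 < A := by rw [hA]; positivity
  obtain ⟨c, hc⟩ : ∃ c : ℝ, c = γ * E / C := ⟨_, rfl⟩
  have hc0 : 0 < c := by rw [hc]; positivity
  obtain ⟨K, hK⟩ : ∃ K : ℝ, K = B / Real.log 2 := ⟨_, rfl⟩
  have hK0 : 0 < K := by rw [hK]; positivity
  obtain ⟨g, hg⟩ : ∃ g : ℝ → ℝ,
      g = fun t => min (K * (Real.log (1 + p * γ) * t)) (K * (t * Real.log (1 + c / t))) :=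
    ⟨_, rfl⟩
  obtain ⟨that, hthat⟩ : ∃ that : ℝ, that = E / (p * C) := ⟨_, rfl⟩
  have hthat0 : 0 < that := by rw [hthat]; positivity
  have hcthat : c / that = p * γ := by
    rw [hc, hthat]; field_simp
  have hωhat_eq : ωhat = K * (Real.log (1 + p * γ) * that) := by
    rw [hωhat, hthat, hK, ← Real.log_div_log]
    field_simp
  have hhat : K * (that * Real.log (1 + c / that)) = ωhat := by
    rw [hcthat, hωhat_eq]; ring
  -- key : f is a right inverse of g on the interval
  have key : ∀ ω ∈ Set.Ioo (0 : ℝ) (1 / A), 0 < f ω ∧ g (f ω) = ω := by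
    intro ω hω
    obtain ⟨hω0, hω1⟩ := hω
    have hfω := hf ω
    by_cases hle : ω ≤ ωhat
    · rw [if_pos hle] at hfω
      set t := ω / (B * Real.logb 2 (1 + p * γ)) with htdef
      clear_value t
      have ht0 : 0 < t := by rw [htdef]; positivity
      have hL : K * (Real.log (1 + p * γ) * t) = ω := by
        rw [htdef, hK, ← Real.log_div_log]
        field_simp
      have httle : t ≤ that := by
        have h1 : that = ωhat / (B * Real.logb 2 (1 + p * γ)) := by
          rw [hωhat, hthat]
          field_simp
        rw [htdef, h1]
        gcongr
      have hcge : p * γ ≤ c / t := by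
        rw [← hcthat]
        exact div_le_div_of_nonneg_left hc0.le ht0 httle
      have hR : K * (Real.log (1 + p * γ) * t) ≤ K * (t * Real.log (1 + c / t)) := by
        have hll := Real.log_le_log (by linarith) (by linarith : 1 + p * γ ≤ 1 + c / t)
        have h' : Real.log (1 + p * γ) * t ≤ t * Real.log (1 + c / t) := by
          rw [mul_comm]
          exact mul_le_mul_of_nonneg_left hll ht0.le
        exact mul_le_mul_of_nonneg_left h' hK0.le
      refine ⟨by rw [hfω]; exact ht0, ?_⟩
      rw [hfω, hg]
      show min _ _ = ω
      rw [min_eq_left hR, hL]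
    · push_neg at hle
      rw [if_neg (not_le.2 hle)] at hfω
      set x := A * ω with hx
      clear_value x
      have hx0 : 0 < x := by rw [hx]; exact mul_pos hA0 hω0
      have hx1 : x < 1 := by
        rw [hx]
        nlinarith [(lt_div_iff₀ hA0).mp hω1]
      have hz2 : -x * Real.exp (-x) < 0 := by
        have : 0 < x * Real.exp (-x) := by positivity
        linarith
      have hz1 : -(Real.exp 1)⁻¹ < -x * Real.exp (-x) := by
        have h1 : Real.log x < x - 1 := Real.log_lt_sub_one_of_pos hx0 (by linarith)
        have h2 : x * Real.exp (-x) = Real.exp (Real.log x - x) := by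
          rw [Real.exp_sub, Real.exp_log hx0, Real.exp_neg]
          ring
        have h3 : Real.exp (Real.log x - x) < Real.exp (-1) := Real.exp_lt_exp.2 (by linarith)
        rw [Real.exp_neg] at h3
        have h4 : x * Real.exp (-x) < (Real.exp 1)⁻¹ := by rw [h2]; exact h3
        linarith
      obtain ⟨hw1, hw2⟩ := hW (-x * Real.exp (-x)) ⟨hz1, hz2⟩
      set w := Wm1 (-x * Real.exp (-x)) with hwdef
      clear_value w
      set u := -w with hu
      clear_value u
      have hw_eq : w = -u := by rw [hu]; ring
      have hu1 : 1 ≤ u := by rw [hu]; linarith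
      have hux : x < u := lt_of_lt_of_le hx1 hu1
      have hueq : u * Real.exp (-u) = x * Real.exp (-x) := by
        have : (-u) * Real.exp (-u) = -x * Real.exp (-x) := by
          rw [← hw_eq]; exact hw2
        linarith
      have hlogeq : Real.log u - u = Real.log x - x := by
        have hcongr := congrArg Real.log hueq
        rw [Real.log_mul (by linarith) (Real.exp_ne_zero _),
          Real.log_mul (ne_of_gt hx0) (Real.exp_ne_zero _),
          Real.log_exp, Real.log_exp] at hcongr
        linarith
      set t := -(ω * Real.log 2) / (B * (w + x)) with htdef
      clear_value t
      have ht_eq : t = ω * Real.log 2 / (B * (u - x)) := by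
        rw [htdef, hw_eq]
        rw [show B * (-u + x) = -(B * (u - x)) by ring, div_neg, neg_div, neg_neg]
      have hux0 : 0 < u - x := by linarith
      have ht0 : 0 < t := by
        rw [ht_eq]; positivity
      have hct : c / t = (u - x) / x := by
        rw [ht_eq, hc, hx, hA]
        field_simp
      have h1ct : 1 + c / t = u / x := by
        rw [hct]; field_simp; ring
      have hKt : K * (t * Real.log (1 + c / t)) = ω := by
        rw [h1ct, Real.log_div (by linarith) (ne_of_gt hx0),
          show Real.log u - Real.log x = u - x by linarith,
          ht_eq, hK]
        field_simp
      have hthat_lt : that < t := by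
        by_contra hcon
        push_neg at hcon
        have hmono : t * Real.log (1 + c / t) ≤ that * Real.log (1 + c / that) :=
          (h0_strictMono hc0).monotoneOn (Set.mem_Ioi.2 ht0)
            (Set.mem_Ioi.2 hthat0) hcon
        have hfin : K * (t * Real.log (1 + c / t)) ≤ K * (that * Real.log (1 + c / that)) :=
          mul_le_mul_of_nonneg_left hmono hK0.le
        rw [hKt, hhat] at hfin
        linarith
      have hcle : c / t ≤ p * γ := by
        rw [← hcthat]
        exact div_le_div_of_nonneg_left hc0.le hthat0 hthat_lt.le
      have hL : K * (t * Real.log (1 + c / t)) ≤ K * (Real.log (1 + p * γ) * t) := by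
        have hct0 : 0 < c / t := by positivity
        have hll := Real.log_le_log (by linarith) (by linarith : 1 + c / t ≤ 1 + p * γ)
        have h' : t * Real.log (1 + c / t) ≤ Real.log (1 + p * γ) * t := by
          rw [mul_comm (Real.log (1 + p * γ)) t]
          exact mul_le_mul_of_nonneg_left hll ht0.le
        exact mul_le_mul_of_nonneg_left h' hK0.le
      refine ⟨by rw [hfω]; exact ht0, ?_⟩
      rw [hfω, hg]
      show min _ _ = ω
      rw [min_eq_right hL, hKt]
  -- g is strictly monotone on Ioi 0
  have hgmono : StrictMonoOn g (Set.Ioi 0) := by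
    intro t1 h1 t2 h2 hlt
    simp only [Set.mem_Ioi] at h1 h2
    have m1 : K * (Real.log (1 + p * γ) * t1) < K * (Real.log (1 + p * γ) * t2) :=
      mul_lt_mul_of_pos_left (mul_lt_mul_of_pos_left hlt hlog1) hK0
    have m2 : K * (t1 * Real.log (1 + c / t1)) < K * (t2 * Real.log (1 + c / t2)) := by
      have hsm : t1 * Real.log (1 + c / t1) < t2 * Real.log (1 + c / t2) :=
        h0_strictMono hc0 (Set.mem_Ioi.2 h1) (Set.mem_Ioi.2 h2) hlt
      exact mul_lt_mul_of_pos_left hsm hK0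
    rw [hg]
    show min _ _ < min _ _
    exact lt_min ((min_le_left _ _).trans_lt m1) ((min_le_right _ _).trans_lt m2)
  -- g is concave on Ioi 0
  have hgconc : ConcaveOn ℝ (Set.Ioi 0) g := by
    have hlin : ConcaveOn ℝ (Set.Ioi 0) (fun t : ℝ => K * (Real.log (1 + p * γ) * t)) := by
      refine ⟨convex_Ioi 0, ?_⟩
      intro t1 _ t2 _ a b _ _ _
      simp only [smul_eq_mul]
      apply le_of_eq
      ring
    have hcc : ConcaveOn ℝ (Set.Ioi 0) (fun t : ℝ => K * (t * Real.log (1 + c / t))) := by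
      have := (h0_concave hc0).smul hK0.le
      simpa [smul_eq_mul] using this
    have hfin := hlin.inf hcc
    rw [hg]
    exact hfin
  -- strict monotonicity of f
  have hmono : StrictMonoOn f (Set.Ioo (0 : ℝ) (1 / A)) := by
    intro ω1 hω1 ω2 hω2 hlt
    obtain ⟨ht1, hg1⟩ := key ω1 hω1
    obtain ⟨ht2, hg2⟩ := key ω2 hω2
    by_contra hcon
    push_neg at hcon
    have := hgmono.monotoneOn (Set.mem_Ioi.2 ht2) (Set.mem_Ioi.2 ht1) hcon
    rw [hg1, hg2] at this
    linarith
  -- convexity of f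
  have hconv : ConvexOn ℝ (Set.Ioo (0 : ℝ) (1 / A)) f := by
    refine ⟨convex_Ioo _ _, ?_⟩
    intro ω1 h1 ω2 h2 a b ha hb hab
    obtain ⟨ht1, hg1⟩ := key ω1 h1
    obtain ⟨ht2, hg2⟩ := key ω2 h2
    have hmem : a • ω1 + b • ω2 ∈ Set.Ioo (0 : ℝ) (1 / A) :=
      (convex_Ioo _ _) h1 h2 ha hb hab
    obtain ⟨ht3, hg3⟩ := key _ hmem
    have hTmem : a • f ω1 + b • f ω2 ∈ Set.Ioi (0 : ℝ) :=
      (convex_Ioi 0) (Set.mem_Ioi.2 ht1) (Set.mem_Ioi.2 ht2) ha hb hab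
    have hcc := hgconc.2 (Set.mem_Ioi.2 ht1) (Set.mem_Ioi.2 ht2) ha hb hab
    simp only [smul_eq_mul] at hcc hg3 ht3 hTmem hmem ⊢
    rw [hg1, hg2] at hcc
    by_contra hcon
    push_neg at hcon
    have hgt := hgmono hTmem (Set.mem_Ioi.2 ht3) hcon
    rw [hg3] at hgt
    have hsm : a • (g (f ω1)) + b • (g (f ω2)) ≤ g (a • f ω1 + b • f ω2) :=
      hgconc.2 (Set.mem_Ioi.2 ht1) (Set.mem_Ioi.2 ht2) ha hb hab
    simp only [smul_eq_mul, hg1, hg2] at hsm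
    linarith
  exact ⟨hconv.continuousOn isOpen_Ioo, hmono, hconv⟩
end

section
/- Let A_m = κ/γ_m for a constant κ > 0 and define φ_m(ω) = −W / ((W − x)·(1 + W)) with x = −A_m·ω and W = W_{−1}(x·e^x). If φ_m(ω_m) = φ_{m'}(ω_{m'}) for ω_m, ω_{m'} ∈ (0, 1/A_m) × (0, 1/A_{m'}), then A_m·ω_m = A_{m'}·ω_{m'}, i.e., ω_m/γ_m = ω_{m'}/γ_{m'}. -/
private lemma f_deriv13 (t : ℝ) :
    HasDerivAt (fun t : ℝ => t * Real.exp (-t)) ((1 - t) * Real.exp (-t)) t := by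
  have h : HasDerivAt (fun t : ℝ => t * Real.exp (-t)) (1 * Real.exp (-t) + t * (Real.exp (-t) * -1)) t :=
    (hasDerivAt_id t).mul ((Real.hasDerivAt_exp (-t)).comp t ((hasDerivAt_id t).neg))
  convert h using 1
  simp [Function.comp]
  ring

private lemma f_mono13 : StrictMonoOn (fun t : ℝ => t * Real.exp (-t)) (Set.Icc 0 1) := by
  apply strictMonoOn_of_deriv_pos (convex_Icc 0 1)
  · exact (continuous_id.mul (Real.continuous_exp.comp continuous_neg)).continuousOn
  · intro x hx
    rw [interior_Icc] at hx
    rw [(f_deriv13 x).deriv]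
    have := Real.exp_pos (-x)
    nlinarith [hx.1, hx.2]

private lemma f_anti13 : StrictAntiOn (fun t : ℝ => t * Real.exp (-t)) (Set.Ici 1) := by
  apply strictAntiOn_of_deriv_neg (convex_Ici 1)
  · exact (continuous_id.mul (Real.continuous_exp.comp continuous_neg)).continuousOn
  · intro x hx
    rw [interior_Ici, Set.mem_Ioi] at hx
    rw [(f_deriv13 x).deriv]
    have := Real.exp_pos (-x)
    nlinarith

private lemma W_facts13 (Wm1 : ℝ → ℝ)
    (hW : ∀ z ∈ Set.Ioo (-(Real.exp 1)⁻¹) (0 : ℝ),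
      Wm1 z ≤ -1 ∧ Wm1 z * Real.exp (Wm1 z) = z)
    (t : ℝ) (ht : t ∈ Set.Ioo (0:ℝ) 1) :
    Wm1 ((-t) * Real.exp (-t)) < -1 ∧
      Wm1 ((-t) * Real.exp (-t)) * Real.exp (Wm1 ((-t) * Real.exp (-t)))
        = (-t) * Real.exp (-t) := by
  obtain ⟨ht0, ht1⟩ := ht
  have hmem : (-t) * Real.exp (-t) ∈ Set.Ioo (-(Real.exp 1)⁻¹) (0:ℝ) := by
    constructor
    · have h1 : t * Real.exp (-t) < 1 * Real.exp (-(1:ℝ)) :=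
        f_mono13 ⟨ht0.le, ht1.le⟩ ⟨by norm_num, le_refl 1⟩ ht1
      have h2 : Real.exp (-(1:ℝ)) = (Real.exp 1)⁻¹ := Real.exp_neg 1
      nlinarith
    · exact mul_neg_of_neg_of_pos (by linarith) (Real.exp_pos _)
  obtain ⟨hle, heq⟩ := hW _ hmem
  refine ⟨?_, heq⟩
  rcases lt_or_eq_of_le hle with h | h
  · exact h
  · exfalso
    rw [h] at heq
    have hfe : (fun u : ℝ => u * Real.exp (-u)) t = (fun u : ℝ => u * Real.exp (-u)) 1 := by
      simp only []
      have : Real.exp (-(1:ℝ)) = Real.exp (-1 : ℝ) := by norm_num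
      nlinarith [heq]
    have := f_mono13.injOn ⟨ht0.le, ht1.le⟩ ⟨by norm_num, le_refl 1⟩ hfe
    linarith

private lemma phi_mono13 (Wm1 : ℝ → ℝ)
    (hW : ∀ z ∈ Set.Ioo (-(Real.exp 1)⁻¹) (0 : ℝ),
      Wm1 z ≤ -1 ∧ Wm1 z * Real.exp (Wm1 z) = z)
    {t1 t2 : ℝ} (h1 : t1 ∈ Set.Ioo (0:ℝ) 1) (h2 : t2 ∈ Set.Ioo (0:ℝ) 1) (hlt : t1 < t2) :
    -(Wm1 ((-t1) * Real.exp (-t1))) /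
        ((Wm1 ((-t1) * Real.exp (-t1)) - (-t1)) * (1 + Wm1 ((-t1) * Real.exp (-t1)))) <
    -(Wm1 ((-t2) * Real.exp (-t2))) /
        ((Wm1 ((-t2) * Real.exp (-t2)) - (-t2)) * (1 + Wm1 ((-t2) * Real.exp (-t2)))) := by
  obtain ⟨hW1lt, hW1eq⟩ := W_facts13 Wm1 hW t1 h1
  obtain ⟨hW2lt, hW2eq⟩ := W_facts13 Wm1 hW t2 h2
  set W1 := Wm1 ((-t1) * Real.exp (-t1)) with hW1def
  set W2 := Wm1 ((-t2) * Real.exp (-t2)) with hW2def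
  set u1 : ℝ := -W1 with hu1
  set u2 : ℝ := -W2 with hu2
  have hu1gt : 1 < u1 := by simp [hu1]; linarith
  have hu2gt : 1 < u2 := by simp [hu2]; linarith
  -- f u1 = f t1, f u2 = f t2
  have hf1 : u1 * Real.exp (-u1) = t1 * Real.exp (-t1) := by
    have : W1 * Real.exp W1 = (-t1) * Real.exp (-t1) := hW1eq
    simp only [hu1, neg_neg]
    nlinarith [this]
  have hf2 : u2 * Real.exp (-u2) = t2 * Real.exp (-t2) := by
    have : W2 * Real.exp W2 = (-t2) * Real.exp (-t2) := hW2eq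
    simp only [hu2, neg_neg]
    nlinarith [this]
  -- u2 < u1
  have hu21 : u2 < u1 := by
    by_contra hcon
    push_neg at hcon
    rcases lt_or_eq_of_le hcon with h | h
    · have := f_anti13 (Set.mem_Ici.2 hu1gt.le) (Set.mem_Ici.2 hu2gt.le) h
      simp only [] at this
      have hlt2 : t1 * Real.exp (-t1) < t2 * Real.exp (-t2) :=
        f_mono13 ⟨h1.1.le, h1.2.le⟩ ⟨h2.1.le, h2.2.le⟩ hlt
      linarith [hf1, hf2]
    · rw [h] at hf1
      have hlt2 : t1 * Real.exp (-t1) < t2 * Real.exp (-t2) :=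
        f_mono13 ⟨h1.1.le, h1.2.le⟩ ⟨h2.1.le, h2.2.le⟩ hlt
      linarith [hf1, hf2]
  -- rewrite both sides as u / ((u - t)(u - 1))
  have e1 : -(W1) / ((W1 - (-t1)) * (1 + W1)) = u1 / ((u1 - t1) * (u1 - 1)) := by
    rw [hu1]; ring_nf
  have e2 : -(W2) / ((W2 - (-t2)) * (1 + W2)) = u2 / ((u2 - t2) * (u2 - 1)) := by
    rw [hu2]; ring_nf
  rw [show W1 - -t1 = W1 - (-t1) from rfl] at *
  have ht1 := h1.1; have ht1' := h1.2; have ht2 := h2.1; have ht2' := h2.2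
  have d1pos : 0 < (u1 - t1) * (u1 - 1) := by
    apply mul_pos <;> nlinarith
  have d2pos : 0 < (u2 - t2) * (u2 - 1) := by
    apply mul_pos <;> nlinarith
  have key : u1 / ((u1 - t1) * (u1 - 1)) < u2 / ((u2 - t2) * (u2 - 1)) := by
    rw [div_lt_div_iff₀ d1pos d2pos]
    nlinarith [mul_pos (sub_pos.2 hu21) (show (0:ℝ) < u1 * u2 - t2 by nlinarith),
      mul_pos (mul_pos (sub_pos.2 hlt) (show (0:ℝ) < u2 by linarith))
        (sub_pos.2 hu1gt)]
  calc -(W1) / ((W1 - (-t1)) * (1 + W1)) = u1 / ((u1 - t1) * (u1 - 1)) := e1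
    _ < u2 / ((u2 - t2) * (u2 - 1)) := key
    _ = -(W2) / ((W2 - (-t2)) * (1 + W2)) := e2.symm

/-- Equality of marginal transmission-time costs forces task ratios
proportional to channel gains: if `φ_m(ω_m) = φ_{m'}(ω_{m'})` where
`φ_m(ω) = -W / ((W - x)·(1 + W))`, `x = -A_m·ω`, `W = W₋₁(x·e^x)`,
`A_m = κ/γ_m`, then `A_m·ω_m = A_{m'}·ω_{m'}`, i.e. `ω_m/γ_m = ω_{m'}/γ_{m'}`. -/
theorem stmt_13 (κ γm γm' : ℝ) (hκ : 0 < κ) (hγm : 0 < γm) (hγm' : 0 < γm')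
    (Wm1 : ℝ → ℝ)
    (hW : ∀ z ∈ Set.Ioo (-(Real.exp 1)⁻¹) (0 : ℝ),
      Wm1 z ≤ -1 ∧ Wm1 z * Real.exp (Wm1 z) = z)
    (Am Am' : ℝ) (hAm : Am = κ / γm) (hAm' : Am' = κ / γm')
    (φ : ℝ → ℝ → ℝ)
    (hφ : ∀ A ω : ℝ, φ A ω =
      -(Wm1 ((-(A * ω)) * Real.exp (-(A * ω)))) /
        ((Wm1 ((-(A * ω)) * Real.exp (-(A * ω))) - (-(A * ω))) *
          (1 + Wm1 ((-(A * ω)) * Real.exp (-(A * ω))))))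
    (ωm ωm' : ℝ)
    (hωm : ωm ∈ Set.Ioo (0 : ℝ) (1 / Am))
    (hωm' : ωm' ∈ Set.Ioo (0 : ℝ) (1 / Am'))
    (heq : φ Am ωm = φ Am' ωm') :
    Am * ωm = Am' * ωm' ∧ ωm / γm = ωm' / γm' := by
  have hAmpos : 0 < Am := by rw [hAm]; positivity
  have hAmpos' : 0 < Am' := by rw [hAm']; positivity
  have ht : Am * ωm ∈ Set.Ioo (0:ℝ) 1 := by
    constructor
    · exact mul_pos hAmpos hωm.1
    · have := hωm.2
      rw [lt_div_iff₀ hAmpos] at this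
      linarith [this]
  have ht' : Am' * ωm' ∈ Set.Ioo (0:ℝ) 1 := by
    constructor
    · exact mul_pos hAmpos' hωm'.1
    · have := hωm'.2
      rw [lt_div_iff₀ hAmpos'] at this
      linarith [this]
  have hmain : Am * ωm = Am' * ωm' := by
    rcases lt_trichotomy (Am * ωm) (Am' * ωm') with h | h | h
    · exfalso
      have := phi_mono13 Wm1 hW ht ht' h
      rw [hφ, hφ] at heq
      linarith [this, heq.le, heq.ge]
    · exact h
    · exfalso
      have := phi_mono13 Wm1 hW ht' ht h
      rw [hφ, hφ] at heq
      linarith [this, heq.le, heq.ge]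
  refine ⟨hmain, ?_⟩
  rw [hAm, hAm'] at hmain
  field_simp at hmain ⊢
  nlinarith [hmain]
end

section
/- For x ∈ (0,1), the function h(x) = −W_{−1}(−x·e^{−x}) / ((W_{−1}(−x·e^{−x}) + x)·(1 + W_{−1}(−x·e^{−x}))) is strictly positive and strictly increasing in x. -/
open Real Set

lemma phi_hasDerivAt (t : ℝ) :
    HasDerivAt (fun s : ℝ => s * Real.exp (-s)) ((1 - t) * Real.exp (-t)) t := by
  have h : HasDerivAt (fun s : ℝ => s * Real.exp (-s)) (1 * Real.exp (-t) + t * (Real.exp (-t) * -1)) t :=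
    (hasDerivAt_id t).mul (((hasDerivAt_id t).neg).exp)
  convert h using 1
  simp; ring

lemma phi_strictAntiOn : StrictAntiOn (fun s : ℝ => s * Real.exp (-s)) (Set.Ici 1) := by
  apply strictAntiOn_of_deriv_neg (convex_Ici 1)
  · exact (continuous_id.mul (continuous_neg.rexp)).continuousOn
  · intro t ht
    rw [interior_Ici] at ht
    rw [(phi_hasDerivAt t).deriv]
    have := Real.exp_pos (-t)
    nlinarith [ht.out]

lemma phi_strictMonoOn : StrictMonoOn (fun s : ℝ => s * Real.exp (-s)) (Set.Icc 0 1) := by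
  apply strictMonoOn_of_deriv_pos (convex_Icc 0 1)
  · exact (continuous_id.mul (continuous_neg.rexp)).continuousOn
  · intro t ht
    rw [interior_Icc] at ht
    rw [(phi_hasDerivAt t).deriv]
    have := Real.exp_pos (-t)
    nlinarith [ht.2]

/-- For `x ∈ (0,1)`, the function
`h(x) = -W₋₁(-x·e^{-x}) / ((W₋₁(-x·e^{-x}) + x)·(1 + W₋₁(-x·e^{-x})))`
is strictly positive and strictly increasing. -/
theorem stmt_14 (Wm1 : ℝ → ℝ)
    (hW : ∀ z ∈ Set.Ioo (-(Real.exp 1)⁻¹) (0 : ℝ),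
      Wm1 z ≤ -1 ∧ Wm1 z * Real.exp (Wm1 z) = z)
    (h : ℝ → ℝ)
    (hh : ∀ x : ℝ, h x =
      -(Wm1 (-x * Real.exp (-x))) /
        ((Wm1 (-x * Real.exp (-x)) + x) * (1 + Wm1 (-x * Real.exp (-x))))) :
    (∀ x ∈ Set.Ioo (0 : ℝ) 1, 0 < h x) ∧
    StrictMonoOn h (Set.Ioo (0 : ℝ) 1) := by
  set ψ : ℝ → ℝ := fun z => -Wm1 (-z) with hψdef
  have hexp1 : (Real.exp 1)⁻¹ = Real.exp (-1) := (Real.exp_neg 1).symm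
  -- basic properties of ψ on (0, e⁻¹)
  have hψ : ∀ z ∈ Set.Ioo (0:ℝ) (Real.exp 1)⁻¹,
      1 < ψ z ∧ ψ z * Real.exp (-(ψ z)) = z := by
    intro z hz
    have hz' : -z ∈ Set.Ioo (-(Real.exp 1)⁻¹) (0:ℝ) :=
      ⟨by linarith [hz.2], by linarith [hz.1]⟩
    obtain ⟨h1, h2⟩ := hW _ hz'
    have hle : 1 ≤ ψ z := by simp only [hψdef]; linarith
    have heq : ψ z * Real.exp (-(ψ z)) = z := by
      simp only [hψdef, neg_neg]
      rw [neg_mul]; rw [h2]; ring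
    have hne : ψ z ≠ 1 := by
      intro h1'
      rw [h1'] at heq
      rw [hexp1] at hz
      simp at heq
      linarith [hz.2]
    exact ⟨lt_of_le_of_ne hle (Ne.symm hne), heq⟩
  have hmem2 : ∀ y : ℝ, 1 < y → y * Real.exp (-y) ∈ Set.Ioo (0:ℝ) (Real.exp 1)⁻¹ := by
    intro y hy
    refine ⟨mul_pos (by linarith) (Real.exp_pos _), ?_⟩
    have := phi_strictAntiOn (Set.mem_Ici.2 le_rfl) (Set.mem_Ici.2 hy.le) hy
    simp only at this
    rw [hexp1]
    simpa using this
  have hψinv : ∀ y : ℝ, 1 < y → ψ (y * Real.exp (-y)) = y := by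
    intro y hy
    obtain ⟨h1, h2⟩ := hψ _ (hmem2 y hy)
    exact phi_strictAntiOn.injOn (Set.mem_Ici.2 h1.le) (Set.mem_Ici.2 hy.le) (by simpa using h2)
  have hψanti : StrictAntiOn ψ (Set.Ioo (0:ℝ) (Real.exp 1)⁻¹) := by
    intro a ha b hb hab
    obtain ⟨ha1, ha2⟩ := hψ a ha
    obtain ⟨hb1, hb2⟩ := hψ b hb
    by_contra hcon
    push_neg at hcon
    rcases eq_or_lt_of_le hcon with heq | hlt
    · rw [← heq] at hb2
      rw [ha2] at hb2
      linarith
    · have := phi_strictAntiOn (Set.mem_Ici.2 ha1.le) (Set.mem_Ici.2 (lt_trans ha1 hlt).le) hlt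
      simp only at this
      rw [ha2, hb2] at this
      linarith
  have hψimg : ψ '' (Set.Ioo (0:ℝ) (Real.exp 1)⁻¹) = Set.Ioi 1 := by
    ext y
    constructor
    · rintro ⟨z, hz, rfl⟩
      exact (hψ z hz).1
    · intro hy
      exact ⟨y * Real.exp (-y), hmem2 y hy, hψinv y hy⟩
  have hψcont : ∀ z ∈ Set.Ioo (0:ℝ) (Real.exp 1)⁻¹, ContinuousAt ψ z := by
    intro z hz
    have hneg : StrictMonoOn (fun w => -(ψ w)) (Set.Ioo (0:ℝ) (Real.exp 1)⁻¹) :=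
      fun a ha b hb hab => neg_lt_neg (hψanti ha hb hab)
    have himg : (fun w => -(ψ w)) '' (Set.Ioo (0:ℝ) (Real.exp 1)⁻¹) = Set.Iio (-1:ℝ) := by
      have : (fun w => -(ψ w)) = (fun t : ℝ => -t) ∘ ψ := rfl
      rw [this, Set.image_comp, hψimg]
      ext t
      simp only [Set.mem_image, Set.mem_Ioi, Set.mem_Iio]
      constructor
      · rintro ⟨s, hs, rfl⟩; linarith
      · intro ht; exact ⟨-t, by linarith, by ring⟩
    have hc1 : ContinuousAt (fun w => -(ψ w)) z := by
      apply hneg.continuousAt_of_image_mem_nhds (isOpen_Ioo.mem_nhds hz)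
      rw [himg]
      exact Iio_mem_nhds (by linarith [(hψ z hz).1])
    have := hc1.neg
    simpa only [Pi.neg_def, neg_neg] using this
  have hψderiv : ∀ z ∈ Set.Ioo (0:ℝ) (Real.exp 1)⁻¹,
      HasDerivAt ψ (((1 - ψ z) * Real.exp (-(ψ z)))⁻¹) z := by
    intro z hz
    apply HasDerivAt.of_local_left_inverse (hψcont z hz) (phi_hasDerivAt (ψ z))
    · have h1 := (hψ z hz).1
      have h2 := Real.exp_pos (-(ψ z))
      nlinarith
    · filter_upwards [isOpen_Ioo.mem_nhds hz] with w hw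
      exact (hψ w hw).2
  -- the function Y
  set Y : ℝ → ℝ := fun x => ψ (x * Real.exp (-x)) with hYdef
  have hmem : ∀ x ∈ Set.Ioo (0:ℝ) 1, x * Real.exp (-x) ∈ Set.Ioo (0:ℝ) (Real.exp 1)⁻¹ := by
    intro x hx
    refine ⟨mul_pos hx.1 (Real.exp_pos _), ?_⟩
    have := phi_strictMonoOn (Set.mem_Icc.2 ⟨hx.1.le, hx.2.le⟩)
      (Set.mem_Icc.2 ⟨zero_le_one, le_rfl⟩) hx.2
    simp only at this
    rw [hexp1]
    simpa using this
  have hY : ∀ x ∈ Set.Ioo (0:ℝ) 1, 1 < Y x ∧ Y x * Real.exp (-(Y x)) = x * Real.exp (-x) :=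
    fun x hx => hψ _ (hmem x hx)
  have hhY : ∀ x ∈ Set.Ioo (0:ℝ) 1, h x = Y x / ((Y x - x) * (Y x - 1)) := by
    intro x hx
    rw [hh x]
    have harg : -x * Real.exp (-x) = -(x * Real.exp (-x)) := by ring
    have hw : Wm1 (-x * Real.exp (-x)) = -(Y x) := by
      rw [harg]; simp only [hYdef, hψdef, neg_neg]
    rw [hw, neg_neg]
    have hden : (-(Y x) + x) * (1 + -(Y x)) = (Y x - x) * (Y x - 1) := by ring
    rw [hden]
  -- key: derivative of h is positive at each point of (0,1)
  have key : ∀ x ∈ Set.Ioo (0:ℝ) 1, ∃ D : ℝ, 0 < D ∧ HasDerivAt h D x := by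
    intro x hx
    have hzx := hmem x hx
    obtain ⟨hy1, hyeq⟩ := hY x hx
    set y := Y x with hy
    set y' : ℝ := ((1 - y) * Real.exp (-y))⁻¹ * ((1 - x) * Real.exp (-x)) with hy'def
    have hYd : HasDerivAt Y y' x := HasDerivAt.comp (h₂ := ψ) x (hψderiv _ hzx) (phi_hasDerivAt x)
    have hx0 : (0:ℝ) < x := hx.1
    have hx1 : x < 1 := hx.2
    have hexy : Real.exp (-y) = x * Real.exp (-x) / y := by
      field_simp at hyeq ⊢
      linarith [hyeq]
    have hy'val : y' = y * (1 - x) / ((1 - y) * x) := by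
      rw [hy'def, hexy]
      have h1 : (1:ℝ) - y ≠ 0 := by linarith
      have h2 : y ≠ 0 := by linarith
      have h3 : Real.exp (-x) ≠ 0 := (Real.exp_pos _).ne'
      field_simp
    clear_value y' y
    have hdenne : (Y x - x) * (Y x - 1) ≠ 0 := by
      rw [← hy]
      exact (mul_pos (by linarith) (by linarith)).ne'
    have hden : HasDerivAt (fun t => (Y t - t) * (Y t - 1))
        ((y' - 1) * (Y x - 1) + (Y x - x) * y') x := by
      have := (hYd.sub (hasDerivAt_id x)).mul (hYd.sub_const 1)
      exact this
    have hH : HasDerivAt (fun t => Y t / ((Y t - t) * (Y t - 1)))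
        ((y' * ((Y x - x) * (Y x - 1)) - Y x * ((y' - 1) * (Y x - 1) + (Y x - x) * y')) /
          ((Y x - x) * (Y x - 1))^2) x := hYd.div hden hdenne
    rw [← hy] at hH
    have hev : (fun t => Y t / ((Y t - t) * (Y t - 1))) =ᶠ[nhds x] h := by
      filter_upwards [isOpen_Ioo.mem_nhds hx] with t ht
      exact (hhY t ht).symm
    refine ⟨_, ?_, hH.congr_of_eventuallyEq hev.symm⟩
    have hNum : y' * ((y - x) * (y - 1)) - y * ((y' - 1) * (y - 1) + (y - x) * y') =
        (y * ((1 - x) * (y^2 - x)) + (x * (y - 1)) * (y * (y - 1))) / (x * (y - 1)) := by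
      rw [hy'val]
      have h1 : (1:ℝ) - y ≠ 0 := by linarith
      have h5 : x * (y - 1) ≠ 0 := by
        apply mul_ne_zero hx0.ne'
        intro hc; rw [sub_eq_zero] at hc; exact absurd hc.symm (by linarith)
      rw [eq_div_iff h5]
      field_simp
      ring
    rw [hNum]
    apply div_pos
    · apply div_pos
      · have : (0:ℝ) < y^2 - x := by nlinarith
        have hp1 : 0 < y * ((1 - x) * (y^2 - x)) := by
          apply mul_pos (by linarith)
          exact mul_pos (by linarith) this
        have hp2 : 0 < (x * (y - 1)) * (y * (y - 1)) := by
          apply mul_pos (mul_pos hx0 (by linarith))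
          exact mul_pos (by linarith) (by linarith)
        linarith
      · exact mul_pos hx0 (by linarith)
    · exact pow_pos (mul_pos (by linarith) (by linarith)) 2
  constructor
  · intro x hx
    rw [hhY x hx]
    obtain ⟨h1, _⟩ := hY x hx
    exact div_pos (by linarith) (mul_pos (by linarith [hx.2]) (by linarith))
  · apply strictMonoOn_of_deriv_pos (convex_Ioo 0 1)
    · intro x hx
      obtain ⟨D, _, hd⟩ := key x hx
      exact hd.continuousAt.continuousWithinAt
    · rw [interior_Ioo]
      intro x hx
      obtain ⟨D, hD, hd⟩ := key x hx
      rw [hd.deriv]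
      exact hD
end

section
/- Suppose positive reals p₁,…,p_M (each ≤ p^max) and γ₁ ≤ γ₂ ≤ … ≤ γ_M satisfy Σ_m p_m·γ_m ≤ p^max·γ_M. Define ω_m = γ_m / Σ_k γ_k and p_m^n = (Σ_k p_k·γ_k)/γ_m. Then p_m^n ≤ p^max·γ_M/γ_m, each per-UAV independent-transmission energy (p_m^n·ω_m·C)/(B·log₂(1 + p_m^n·γ_m)) equals (Σ_k p_k γ_k/ Σ_k γ_k)·C/(B·log₂(1 + Σ_k p_k γ_k)), and the total independent transmission time Σ_m ω_m·C/(B·log₂(1 + p_m^n γ_m)) equals the cooperative time C/(B·log₂(1 + Σ_k p_k γ_k)). -/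
/-- Appendix D construction: if the cooperative SNR `Σ p_k γ_k` does not exceed
`p^max·γ_M`, then the allocation `ω_m = γ_m / Σ γ_k`, `p_m^n = (Σ p_k γ_k)/γ_m`
gives `p_m^n ≤ p^max·γ_M/γ_m`, identical per-UAV energy, and total independent
transmission time equal to the cooperative one. -/
theorem stmt_16 (M : ℕ) (hM : 0 < M) (pmax C B : ℝ)
    (hpmax : 0 < pmax) (hC : 0 < C) (hB : 0 < B)
    (p γ : Fin M → ℝ) (hp : ∀ m, 0 < p m) (hple : ∀ m, p m ≤ pmax)
    (hγ : ∀ m, 0 < γ m) (hγmono : Monotone γ)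
    (hS : ∑ k, p k * γ k ≤ pmax * γ ⟨M - 1, Nat.sub_lt hM one_pos⟩)
    (ω pn : Fin M → ℝ)
    (hω : ∀ m, ω m = γ m / ∑ k, γ k)
    (hpn : ∀ m, pn m = (∑ k, p k * γ k) / γ m) :
    (∀ m, pn m ≤ pmax * γ ⟨M - 1, Nat.sub_lt hM one_pos⟩ / γ m) ∧
    (∀ m, pn m * ω m * C / (B * Real.logb 2 (1 + pn m * γ m))
      = ((∑ k, p k * γ k) / ∑ k, γ k) * C /
          (B * Real.logb 2 (1 + ∑ k, p k * γ k))) ∧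
    (∑ m, ω m * C / (B * Real.logb 2 (1 + pn m * γ m))
      = C / (B * Real.logb 2 (1 + ∑ k, p k * γ k))) := by
  set S : ℝ := ∑ k, p k * γ k with hSdef
  have hΓpos : 0 < ∑ k, γ k := by
    apply Finset.sum_pos (fun i _ => hγ i)
    exact Finset.univ_nonempty_iff.2 ⟨⟨0, hM⟩⟩
  have hkey : ∀ m, pn m * γ m = S := by
    intro m
    rw [hpn m, div_mul_cancel₀ _ (hγ m).ne']
  refine ⟨fun m => ?_, fun m => ?_, ?_⟩
  · rw [hpn m]
    gcongr
    exact (hγ m).le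
  · rw [hkey m, hpn m, hω m]
    rw [div_mul_div_comm, mul_comm (γ m), mul_div_mul_right _ _ (hγ m).ne']
  · have hsum : ∑ m, ω m = 1 := by
      simp only [hω, ← Finset.sum_div]
      exact div_self hΓpos.ne'
    calc ∑ m, ω m * C / (B * Real.logb 2 (1 + pn m * γ m))
        = ∑ m, ω m * (C / (B * Real.logb 2 (1 + S))) := by
          refine Finset.sum_congr rfl fun m _ => ?_
          rw [hkey m, mul_div_assoc]
      _ = C / (B * Real.logb 2 (1 + S)) := by
          rw [← Finset.sum_mul, hsum, one_mul]
end
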